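/- Write the shifted Bernoulli-Catalan polynomials Q̃_n(w) = Q_n(w + 1/2), so Q̃_{2ν}(w) = ∑_{j=0}^{ν} a_j^{(ν)} w^{2j} and Q̃_{2ν-1}(w) = ∑_{j=1}^{ν} b_j^{(ν)} w^{2j-1}. Then all coefficients are nonzero with alternating signs: sgn(a_j^{(ν)}) = (-1)^{ν-j} and sgn(b_j^{(ν)}) = (-1)^{ν-j}. -/

import Mathlib

open Polynomial Finset

/-- The operator `𝒦 = 2 ∑_{r≥1} ((2^{2r}-1)/(2r)!) B_{2r} (d/dz)^{2r-2}` acting on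
polynomials (the sum is finite on any polynomial, since high derivatives vanish). -/
noncomputable def KOp (P : Polynomial ℚ) : Polynomial ℚ :=
  2 * ∑ r ∈ Finset.Icc 1 (P.natDegree + 1),
    Polynomial.C ((((2 : ℚ) ^ (2 * r) - 1) / (Nat.factorial (2 * r))) * _root_.bernoulli (2 * r)) *
      (Polynomial.derivative^[2 * r - 2] P)

/-!
Put `P_n = Q_n(X + 1/2)`. Translation commutes with derivatives, so `P_1 = X` and
`P_n = 𝒦 (∑ P_k P_{n-k})`. By induction every `P_n` has positive coefficient of `X^n`, and
its coefficient of `X^{n-2r}` is zero or of sign `(-1)^r`, all other coefficients vanishing;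
this shape is stable under products and sums. In `𝒦 S` the coefficient of `X^{n-2r}` collects
the coefficients of `X^{n-2r+2s}` in `S` times `B_{2s+2}`, and since `sgn B_{2s+2} = (-1)^s`
all these terms have sign `(-1)^r`. The term `s = r` involves the positive leading coefficient
of `S`, so no coefficient of `P_n = 𝒦 S` vanishes.
-/

namespace BernoulliCatalan

open scoped Nat

/-- Read off from `ζ(2r+2) > 0` and Euler's formula for `ζ(2r+2)`. -/
theorem neg_one_pow_mul_bernoulli_pos (r : ℕ) :
    0 < (-1 : ℚ) ^ r * _root_.bernoulli (2 * (r + 1)) := by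
  let c : ℝ := 2 ^ (2 * (r + 1) - 1) * Real.pi ^ (2 * (r + 1)) / (2 * (r + 1))!
  have hc : 0 < c := by positivity
  have hzeta_pos : 0 < ((-1 : ℚ) ^ r * _root_.bernoulli (2 * (r + 1)) : ℝ) * c :=
    calc 0 < (1 : ℝ) := one_pos
      _ ≤ _ := by simpa using le_hasSum (hasSum_zeta_nat r.succ_ne_zero) 1 fun _ _ ↦ by positivity
      _ = _ := by push_cast [c]; ring
  exact_mod_cast pos_of_mul_pos_left hzeta_pos hc.le

/-- `KOp P = 2 * ∑ r ∈ Icc 1 (P.natDegree + 1), C (kCoeff r) * derivative^[2 * r - 2] P`. -/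
noncomputable def kCoeff (r : ℕ) : ℚ :=
  ((2 : ℚ) ^ (2 * r) - 1) / (2 * r)! * _root_.bernoulli (2 * r)

theorem neg_one_pow_mul_kCoeff_pos (r : ℕ) : 0 < (-1 : ℚ) ^ r * kCoeff (r + 1) := by
  have hfactor : (0 : ℚ) < ((2 : ℚ) ^ (2 * (r + 1)) - 1) / (2 * (r + 1))! := by
    have : (1 : ℚ) < 2 ^ (2 * (r + 1)) := one_lt_pow₀ one_lt_two (by omega)
    exact div_pos (by linarith) (by positivity)
  rw [kCoeff, mul_left_comm]
  exact mul_pos hfactor (neg_one_pow_mul_bernoulli_pos r)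

theorem coeff_KOp (S : ℚ[X]) (m : ℕ) :
    (KOp S).coeff m = 2 * ∑ r ∈ range (S.natDegree + 1),
      kCoeff (r + 1) * (m + 2 * r).descFactorial (2 * r) * S.coeff (m + 2 * r) := by
  rw [KOp, coeff_ofNat_mul, finsetSum_coeff, ← Ico_add_one_right_eq_Icc, sum_Ico_eq_sum_range,
    show S.natDegree + 1 + 1 - 1 = S.natDegree + 1 by omega]
  congr 1
  refine sum_congr rfl fun r _ ↦ ?_
  rw [coeff_C_mul, coeff_iterate_derivative, nsmul_eq_mul, show 2 * (1 + r) - 2 = 2 * r by omega,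
    add_comm 1 r, kCoeff]
  ring

theorem iterate_derivative_taylor (c : ℚ) (p : ℚ[X]) (k : ℕ) :
    derivative^[k] (taylor c p) = taylor c (derivative^[k] p) := by
  induction k generalizing p with
  | zero => rfl
  | succ k ih =>
    rw [Function.iterate_succ_apply, Function.iterate_succ_apply, ← ih]
    simp [taylor_apply, derivative_comp]

theorem taylor_KOp (c : ℚ) (P : ℚ[X]) : taylor c (KOp P) = KOp (taylor c P) := by
  rw [KOp, KOp, natDegree_taylor, taylor_mul, map_sum]
  congr 1
  · exact ofNat_comp 2
  · exact sum_congr rfl fun r _ ↦ by rw [taylor_mul, taylor_C, iterate_derivative_taylor]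

structure IsAltSign (n : ℕ) (P : ℚ[X]) : Prop where
  coeff_eq_zero : ∀ m, (∀ r, m + 2 * r ≠ n) → P.coeff m = 0
  sign_nonneg : ∀ m r, m + 2 * r = n → 0 ≤ (-1 : ℚ) ^ r * P.coeff m
  coeff_pos : 0 < P.coeff n

namespace IsAltSign

variable {n : ℕ} {P : ℚ[X]}

theorem exists_or_coeff_eq_zero (h : IsAltSign n P) (m : ℕ) :
    (∃ r, m + 2 * r = n) ∨ P.coeff m = 0 := by
  by_cases hm : ∃ r, m + 2 * r = n
  · exact .inl hm
  · exact .inr (h.coeff_eq_zero m fun r hr ↦ hm ⟨r, hr⟩)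

theorem natDegree_le (h : IsAltSign n P) : P.natDegree ≤ n :=
  natDegree_le_iff_coeff_eq_zero.mpr fun m hm ↦ h.coeff_eq_zero m fun r ↦ by omega

theorem mul {a b : ℕ} {A B : ℚ[X]} (hA : IsAltSign a A) (hB : IsAltSign b B) :
    IsAltSign (a + b) (A * B) where
  coeff_eq_zero q hq := by
    rw [coeff_mul]
    refine sum_eq_zero fun ⟨i, j⟩ hij ↦ ?_
    rw [HasAntidiagonal.mem_antidiagonal] at hij
    dsimp only at hij ⊢
    rcases hA.exists_or_coeff_eq_zero i with ⟨s, hs⟩ | hi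
    · rcases hB.exists_or_coeff_eq_zero j with ⟨t, ht⟩ | hj
      · exact absurd (by omega) (hq (s + t))
      · rw [hj, mul_zero]
    · rw [hi, zero_mul]
  sign_nonneg q r hqr := by
    rw [coeff_mul, mul_sum]
    refine sum_nonneg fun ⟨i, j⟩ hij ↦ ?_
    rw [HasAntidiagonal.mem_antidiagonal] at hij
    dsimp only at hij ⊢
    rcases hA.exists_or_coeff_eq_zero i with ⟨s, hs⟩ | hi
    · rcases hB.exists_or_coeff_eq_zero j with ⟨t, ht⟩ | hj
      · rw [show r = s + t by omega, pow_add, mul_mul_mul_comm]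
        exact mul_nonneg (hA.sign_nonneg i s hs) (hB.sign_nonneg j t ht)
      · rw [hj, mul_zero, mul_zero]
    · rw [hi, zero_mul, mul_zero]
  coeff_pos := by
    rw [coeff_mul_add_eq_of_natDegree_le hA.natDegree_le hB.natDegree_le]
    exact mul_pos hA.coeff_pos hB.coeff_pos

theorem sum {ι : Type*} {s : Finset ι} {f : ι → ℚ[X]} (hs : s.Nonempty)
    (h : ∀ i ∈ s, IsAltSign n (f i)) : IsAltSign n (∑ i ∈ s, f i) where
  coeff_eq_zero m hm := by
    rw [finsetSum_coeff]
    exact sum_eq_zero fun i hi ↦ (h i hi).coeff_eq_zero m hm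
  sign_nonneg m r hmr := by
    rw [finsetSum_coeff, mul_sum]
    exact sum_nonneg fun i hi ↦ (h i hi).sign_nonneg m r hmr
  coeff_pos := by
    rw [finsetSum_coeff]
    exact sum_pos (fun i hi ↦ (h i hi).coeff_pos) hs

theorem sign_nonneg_KOp_term {m r : ℕ} (h : IsAltSign (m + 2 * r) P) (s : ℕ) :
    0 ≤ (-1 : ℚ) ^ r *
      (kCoeff (s + 1) * (m + 2 * s).descFactorial (2 * s) * P.coeff (m + 2 * s)) := by
  rcases h.exists_or_coeff_eq_zero (m + 2 * s) with ⟨t, ht⟩ | hs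
  · rw [show r = s + t by omega, pow_add, show ∀ x y z w u : ℚ, x * y * (z * w * u) =
      w * (x * z) * (y * u) from fun _ _ _ _ _ ↦ by ring]
    exact mul_nonneg (mul_nonneg (Nat.cast_nonneg _) (neg_one_pow_mul_kCoeff_pos s).le)
      (h.sign_nonneg _ t ht)
  · rw [hs, mul_zero, mul_zero]

theorem sign_pos_coeff_KOp {m r : ℕ} (h : IsAltSign (m + 2 * r) P) :
    0 < (-1 : ℚ) ^ r * (KOp P).coeff m := by
  have hdeg : m + 2 * r ≤ P.natDegree := le_natDegree_of_ne_zero h.coeff_pos.ne'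
  rw [coeff_KOp, mul_left_comm, mul_sum]
  refine mul_pos two_pos (sum_pos' (fun s _ ↦ h.sign_nonneg_KOp_term s)
    ⟨r, mem_range.mpr (by omega), ?_⟩)
  rw [show ∀ x y z w : ℚ, x * (y * z * w) = z * (x * y) * w from fun _ _ _ _ ↦ by ring]
  exact mul_pos (mul_pos (by exact_mod_cast Nat.descFactorial_pos.mpr (by omega))
    (neg_one_pow_mul_kCoeff_pos r)) h.coeff_pos

theorem KOp (h : IsAltSign n P) : IsAltSign n (KOp P) where
  coeff_eq_zero m hm := by
    rw [coeff_KOp]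
    refine mul_eq_zero_of_right _ (sum_eq_zero fun s _ ↦ ?_)
    rw [h.coeff_eq_zero _ fun r ↦ by simpa [mul_add, add_assoc] using hm (s + r), mul_zero]
  sign_nonneg m r hmr := (hmr ▸ h).sign_pos_coeff_KOp.le
  coeff_pos := by simpa using (show IsAltSign (n + 2 * 0) P from h).sign_pos_coeff_KOp

end IsAltSign

theorem isAltSign_X : IsAltSign 1 X where
  coeff_eq_zero m hm := coeff_X_of_ne_one fun h ↦ hm 0 (by omega)
  sign_nonneg m r hmr := by
    obtain ⟨rfl, rfl⟩ : m = 1 ∧ r = 0 := by omega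
    simp
  coeff_pos := by simp

section Recursion

variable {P : ℕ → ℚ[X]}

theorem isAltSign_sum_mul {n : ℕ} (hn : 2 ≤ n)
    (hP : ∀ k, 1 ≤ k → k < n → IsAltSign k (P k)) :
    IsAltSign n (∑ k ∈ Ico 1 n, P k * P (n - k)) := by
  refine IsAltSign.sum ⟨1, mem_Ico.mpr ⟨le_rfl, hn⟩⟩ fun k hk ↦ ?_
  rw [mem_Ico] at hk
  simpa [Nat.add_sub_cancel' hk.2.le] using
    (hP k hk.1 hk.2).mul (hP (n - k) (by omega) (by omega))

theorem isAltSign_of_rec (hP1 : P 1 = X)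
    (hrec : ∀ n, 2 ≤ n → P n = KOp (∑ k ∈ Ico 1 n, P k * P (n - k))) (n : ℕ)
    (hn : 1 ≤ n) : IsAltSign n (P n) := by
  induction n using Nat.strong_induction_on with
  | _ n ih =>
    rcases hn.eq_or_lt with rfl | hn
    · exact hP1 ▸ isAltSign_X
    · exact hrec n hn ▸ (isAltSign_sum_mul hn fun k hk hkn ↦ ih k hkn hk).KOp

theorem sign_pos_coeff_of_rec (hP1 : P 1 = X)
    (hrec : ∀ n, 2 ≤ n → P n = KOp (∑ k ∈ Ico 1 n, P k * P (n - k))) (m r : ℕ)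
    (h : 1 ≤ m + 2 * r) :
    0 < (-1 : ℚ) ^ r * (P (m + 2 * r)).coeff m := by
  rcases h.eq_or_lt with h | h
  · obtain ⟨rfl, rfl⟩ : m = 1 ∧ r = 0 := by omega
    simp [hP1]
  · rw [hrec _ h]
    exact (isAltSign_sum_mul h fun k hk _ ↦ isAltSign_of_rec hP1 hrec k hk).sign_pos_coeff_KOp

end Recursion

end BernoulliCatalan

theorem bernoulliCatalan_shifted_alternating_signs_general (Q : ℕ → Polynomial ℚ)
    (h1 : Q 1 = X - C (1 / 2))
    (hrec : ∀ n : ℕ, 2 ≤ n → Q n = KOp (∑ k ∈ Finset.Ico 1 n, Q k * Q (n - k))) :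
    ∀ ν : ℕ, 1 ≤ ν →
      (∀ j : ℕ, j ≤ ν →
        0 < (-1 : ℚ) ^ (ν - j) * ((Q (2 * ν)).comp (X + C (1 / 2))).coeff (2 * j)) ∧
      (∀ j : ℕ, 1 ≤ j → j ≤ ν →
        0 < (-1 : ℚ) ^ (ν - j) * ((Q (2 * ν - 1)).comp (X + C (1 / 2))).coeff (2 * j - 1)) := by
  have hsign := BernoulliCatalan.sign_pos_coeff_of_rec (P := fun n ↦ taylor (1 / 2) (Q n))
    (by simp [h1, taylor_X]) fun n hn ↦ by
      simp only [hrec n hn, BernoulliCatalan.taylor_KOp, map_sum, taylor_mul]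
  simp only [taylor_apply] at hsign
  intro ν hν
  refine ⟨fun j hj ↦ ?_, fun j hj1 hj2 ↦ ?_⟩
  · simpa [show 2 * j + 2 * (ν - j) = 2 * ν by omega] using hsign (2 * j) (ν - j) (by omega)
  · simpa [show 2 * j - 1 + 2 * (ν - j) = 2 * ν - 1 by omega] using
      hsign (2 * j - 1) (ν - j) (by omega)

/-- The shifted Bernoulli-Catalan polynomials `Q̃_n(w) = Q_n(w + 1/2)` have all
coefficients nonzero with alternating signs: the coefficient `a_j^{(ν)}` of `w^{2j}` in
`Q̃_{2ν}` has sign `(-1)^{ν-j}` (for `0 ≤ j ≤ ν`), and the coefficient `b_j^{(ν)}` of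
`w^{2j-1}` in `Q̃_{2ν-1}` has sign `(-1)^{ν-j}` (for `1 ≤ j ≤ ν`). -/
theorem bernoulliCatalan_shifted_alternating_signs (Q : ℕ → Polynomial ℚ)
    (h0 : Q 0 = 0) (h1 : Q 1 = X - C (1 / 2))
    (hrec : ∀ n : ℕ, 2 ≤ n → Q n = KOp (∑ k ∈ Finset.Ico 1 n, Q k * Q (n - k))) :
    ∀ ν : ℕ, 1 ≤ ν →
      (∀ j : ℕ, j ≤ ν →
        0 < (-1 : ℚ) ^ (ν - j) * ((Q (2 * ν)).comp (X + C (1 / 2))).coeff (2 * j)) ∧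
      (∀ j : ℕ, 1 ≤ j → j ≤ ν →
        0 < (-1 : ℚ) ^ (ν - j) * ((Q (2 * ν - 1)).comp (X + C (1 / 2))).coeff (2 * j - 1)) :=
  bernoulliCatalan_shifted_alternating_signs_general Q h1 hrec
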